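/- arXiv:1202.4845 — 2 statements merged into one kernel-verified Lean document; each statement's English description precedes it below -/
import Mathlib

section
/- Let m ∈ Π₂ and ε > 0. For every measurable control v : [0,T] → V there exists δ(v) > 0 such that for every measurable control u : [0,T] → U, |∫_{ℝ^N} ∫_0^T ℓ(x,s,u(s),v(s)) ds dm(x) − ∫_{ℝ^N} ∫_0^T ℓ(x,s,u(s),v((s−δ(v))₊)) ds dm(x)| ≤ ε, where (s−δ)₊ = max(s−δ,0). -/
open MeasureTheory Set Filter Topology
open scoped ENNReal NNReal

noncomputable section

abbrev EN (N : ℕ) : Type := EuclideanSpace ℝ (Fin N)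



/-- The set `Π₂` of Borel probability measures on `ℝ^N` with finite second moment. -/
def Pi2 (N : ℕ) : Set (Measure (EN N)) :=
  {m | IsProbabilityMeasure m ∧ (∫⁻ x, (‖x‖₊ : ℝ≥0∞) ^ 2 ∂m) < ⊤}

/-- Couplings of two measures. -/
def couplings {N : ℕ} (m m' : Measure (EN N)) : Set (Measure (EN N × EN N)) :=
  {γ | γ.map Prod.fst = m ∧ γ.map Prod.snd = m'}

/-- The Monge-Kantorovich distance `d₁`. -/
def d1 {N : ℕ} (m m' : Measure (EN N)) : ℝ :=
  ⨅ γ : couplings m m', ∫ p, ‖p.1 - p.2‖ ∂(γ.1)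

/-- Standing assumptions on the instantaneous reward `ℓ` : continuity in all variables,
boundedness, and Lipschitz continuity in `(x,t)` uniformly in `(u,v)`. -/
def RegReward (T : ℝ) {N dU dV : ℕ} (U : Set (EN dU)) (V : Set (EN dV))
    (l : EN N → ℝ → EN dU → EN dV → ℝ) : Prop :=
  ContinuousOn (fun p : EN N × ℝ × EN dU × EN dV => l p.1 p.2.1 p.2.2.1 p.2.2.2)
      (univ ×ˢ Icc 0 T ×ˢ U ×ˢ V) ∧
  (∃ C, ∀ x, ∀ t ∈ Icc 0 T, ∀ u ∈ U, ∀ v ∈ V, |l x t u v| ≤ C) ∧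
  ∃ C, ∀ x x', ∀ t ∈ Icc 0 T, ∀ t' ∈ Icc 0 T, ∀ u ∈ U, ∀ v ∈ V,
    |l x t u v - l x' t' u v| ≤ C * (‖x - x'‖ + |t - t'|)

/-- The Hamiltonian `H(t,μ) = inf_u sup_v ∫ ℓ(x,t,u,v) dμ(x)`. -/
def Ham {N dU dV : ℕ} (U : Set (EN dU)) (V : Set (EN dV))
    (l : EN N → ℝ → EN dU → EN dV → ℝ) (t : ℝ) (μ : Measure (EN N)) : ℝ :=
  ⨅ u : U, ⨆ v : V, ∫ x, l x t u v ∂μ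

/-- Isaacs' condition. -/
def IsaacsCond (T : ℝ) {N dU dV : ℕ} (U : Set (EN dU)) (V : Set (EN dV))
    (l : EN N → ℝ → EN dU → EN dV → ℝ) : Prop :=
  ∀ t ∈ Icc 0 T, ∀ m ∈ Pi2 N,
    (⨅ u : U, ⨆ v : V, ∫ x, l x t u v ∂m) = ⨆ v : V, ⨅ u : U, ∫ x, l x t u v ∂m

/-!
Since `m` is tight, only `x` in a compact set `K` matter, up to a tail `2 C T m(Kᶜ)`. On the
compact set `K × [0,T] × U × V` the reward is uniformly continuous and bounded, hence
`|ℓ(x,t,a,b) - ℓ(x,t,a,b')| ≤ η + A ‖b - b'‖` there, uniformly in the control `a`. So the two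
payoffs differ by at most `η T + A ∫₀ᵀ ‖v(s) - v((s-δ)₊)‖ ds` plus the tail, and the middle
integral tends to `0` with `δ` by continuity of translations in `L¹`.
-/

theorem tendsto_setIntegral_norm_sub_comp_sub {G E : Type*} [NormedAddCommGroup G]
    [MeasurableSpace G] [BorelSpace G] [LocallyCompactSpace G] {μ : Measure G} [μ.Regular]
    [μ.IsAddRightInvariant] [NormedAddCommGroup E] [NormedSpace ℝ E] {f : G → E}
    (hf : Integrable f μ) {S : Set G} (hS : μ S ≠ ∞) :
    Tendsto (fun t => ∫ s in S, ‖f s - f (s - t)‖ ∂μ) (𝓝 0) (𝓝 0) := by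
  rw [Metric.tendsto_nhds]
  intro β hβ
  obtain ⟨g, hg_supp, hfg, hg_cont, hg_int⟩ :=
    hf.exists_hasCompactSupport_integral_sub_le (show 0 < β / 4 by positivity)
  set c := β / 4 / (μ.real S + 1)
  obtain ⟨θ, hθ, hgθ⟩ := Metric.uniformContinuous_iff.1
    (hg_supp.uniformContinuous_of_continuous hg_cont) c (by positivity)
  filter_upwards [Metric.ball_mem_nhds 0 hθ] with t ht
  have hclose : ∀ s, ‖g s - g (s - t)‖ ≤ c := by
    intro s
    have := hgθ (show dist s (s - t) < θ by simpa [dist_eq_norm] using ht)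
    rw [dist_eq_norm] at this
    exact this.le
  have htri : ∀ s, ‖f s - f (s - t)‖ ≤ ‖f s - g s‖ + c + ‖g (s - t) - f (s - t)‖ := by
    intro s
    calc ‖f s - f (s - t)‖ = ‖(f s - g s) + (g s - g (s - t)) + (g (s - t) - f (s - t))‖ := by
          congr 1; abel
      _ ≤ ‖f s - g s‖ + ‖g s - g (s - t)‖ + ‖g (s - t) - f (s - t)‖ := norm_add₃_le
      _ ≤ _ := by gcongr; exact hclose s
  have hfg_int : Integrable (fun s => ‖f s - g s‖) μ := (hf.sub hg_int).norm
  have hgf_int : Integrable (fun s => ‖g (s - t) - f (s - t)‖) μ :=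
    ((hg_int.sub hf).comp_sub_right t).norm
  have hc_int : IntegrableOn (fun _ => c) S μ := integrableOn_const hS
  have hmid : c * μ.real S ≤ β / 4 := by
    rw [div_mul_eq_mul_div, div_le_iff₀ (by positivity)]
    nlinarith [measureReal_nonneg (μ := μ) (s := S)]
  have hshift : ∫ s, ‖g (s - t) - f (s - t)‖ ∂μ ≤ β / 4 := by
    rw [integral_sub_right_eq_self (fun s => ‖g s - f s‖) t]
    simpa only [norm_sub_rev] using hfg
  have hbound : ∫ s in S, ‖f s - f (s - t)‖ ∂μ ≤ 3 * (β / 4) :=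
    calc ∫ s in S, ‖f s - f (s - t)‖ ∂μ
        ≤ ∫ s in S, (‖f s - g s‖ + c + ‖g (s - t) - f (s - t)‖) ∂μ :=
          integral_mono_of_nonneg (.of_forall fun _ => norm_nonneg _)
            ((hfg_int.integrableOn.add hc_int).add hgf_int.integrableOn) (.of_forall htri)
      _ = ∫ s in S, ‖f s - g s‖ ∂μ + c * μ.real S
            + ∫ s in S, ‖g (s - t) - f (s - t)‖ ∂μ := by
          rw [integral_add (f := fun s => ‖f s - g s‖ + c) (hfg_int.integrableOn.add hc_int)
            hgf_int.integrableOn, integral_add hfg_int.integrableOn hc_int, setIntegral_const,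
            smul_eq_mul, mul_comm]
      _ ≤ ∫ s, ‖f s - g s‖ ∂μ + β / 4 + ∫ s, ‖g (s - t) - f (s - t)‖ ∂μ :=
          add_le_add (add_le_add (setIntegral_le_integral hfg_int
            (.of_forall fun _ => norm_nonneg _)) hmid)
            (setIntegral_le_integral hgf_int (.of_forall fun _ => norm_nonneg _))
      _ ≤ 3 * (β / 4) := by linarith
  rw [Real.dist_0_eq_abs,
    abs_of_nonneg (setIntegral_nonneg_of_ae (.of_forall fun _ => norm_nonneg _))]
  linarith

theorem tendsto_setIntegral_norm_sub_comp_delay {E : Type*} [NormedAddCommGroup E]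
    [NormedSpace ℝ E] {v : ℝ → E} {T : ℝ} (hv : IntegrableOn v (Icc 0 T)) :
    Tendsto (fun δ => ∫ s in Icc 0 T, ‖v s - v (max (s - δ) 0)‖) (𝓝[≥] 0) (𝓝 0) := by
  -- for `0 ≤ δ ≤ 1` the delayed control is the translate by `δ` of `f`
  set f : ℝ → E := (Icc (-1) T).indicator fun s => v (max s 0)
  have hf : Integrable f := by
    refine (integrable_indicator_iff measurableSet_Icc).2 (IntegrableOn.mono_set ?_
      (Icc_subset_Icc_union_Icc (b := 0)))
    refine IntegrableOn.union ?_ ?_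
    · refine (integrableOn_const (C := v 0) measure_Icc_lt_top.ne).congr_fun
        (fun s hs => ?_) measurableSet_Icc
      simp only [max_eq_right hs.2]
    · exact hv.congr_fun (fun s hs => by simp only [max_eq_left hs.1]) measurableSet_Icc
  refine (tendsto_setIntegral_norm_sub_comp_sub hf
    (measure_Icc_lt_top (a := (0 : ℝ)) (b := T)).ne |>.mono_left nhdsWithin_le_nhds).congr' ?_
  filter_upwards [Icc_mem_nhdsGE (show (0 : ℝ) < 1 by norm_num)] with δ hδ
  refine setIntegral_congr_fun measurableSet_Icc fun s hs => ?_
  have hs' : s - δ ∈ Icc (-1) T := ⟨by linarith [hs.1, hδ.2], by linarith [hs.2, hδ.1]⟩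
  have hs'' : s ∈ Icc (-1) T := ⟨by linarith [hs.1], hs.2⟩
  simp only [f, indicator_of_mem hs', indicator_of_mem hs'', max_eq_left hs.1]

theorem ContinuousOn.aestronglyMeasurable_comp {α X Y : Type*} [MeasurableSpace α]
    [TopologicalSpace X] [MeasurableSpace X] [OpensMeasurableSpace X] [TopologicalSpace Y]
    [TopologicalSpace.PseudoMetrizableSpace Y] [SecondCountableTopologyEither X Y] {g : X → Y}
    {S : Set X} (hg : ContinuousOn g S) (hS : MeasurableSet S) {μ : Measure α} {φ : α → X}
    (hφ : Measurable φ) (hφS : ∀ᵐ a ∂μ, φ a ∈ S) : AEStronglyMeasurable (g ∘ φ) μ := by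
  have : AEStronglyMeasurable g (μ.map φ) := by
    rw [← Measure.restrict_eq_self_of_ae_mem ((ae_map_iff hφ.aemeasurable hS).2 hφS)]
    exact hg.aestronglyMeasurable hS
  exact this.comp_measurable hφ

theorem IsCompact.exists_dist_le_add_mul_dist {X Y : Type*} [PseudoMetricSpace X]
    [PseudoMetricSpace Y] {K : Set X} (hK : IsCompact K) {g : X → Y} (hg : ContinuousOn g K)
    {η : ℝ} (hη : 0 < η) :
    ∃ A, 0 ≤ A ∧ ∀ p ∈ K, ∀ q ∈ K, dist (g p) (g q) ≤ η + A * dist p q := by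
  obtain ⟨θ, hθ, hgθ⟩ :=
    Metric.uniformContinuousOn_iff_le.1 (hK.uniformContinuousOn_of_continuous hg) η hη
  set D := Metric.diam (g '' K)
  refine ⟨D / θ, by positivity, fun p hp q hq => ?_⟩
  rcases le_or_gt (dist p q) θ with hpq | hpq
  · have : 0 ≤ D / θ * dist p q := by positivity
    linarith [hgθ p hp q hq hpq]
  · calc dist (g p) (g q) ≤ D := Metric.dist_le_diam_of_mem
          (hK.image_of_continuousOn hg).isBounded (mem_image_of_mem g hp) (mem_image_of_mem g hq)
      _ = D / θ * θ := by field_simp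
      _ ≤ η + D / θ * dist p q := by
          have : D / θ * θ ≤ D / θ * dist p q := by gcongr
          linarith

theorem norm_integral_le_add_of_norm_le_on {α E : Type*} [MeasurableSpace α]
    [NormedAddCommGroup E] [NormedSpace ℝ E] {μ : Measure α} [IsFiniteMeasure μ] {F : α → E}
    {K : Set α} (hK : MeasurableSet K) {a b : ℝ} (hFK : ∀ x ∈ K, ‖F x‖ ≤ a)
    (hFKc : ∀ x ∉ K, ‖F x‖ ≤ b) :
    ‖∫ x, F x ∂μ‖ ≤ a * μ.real K + b * μ.real Kᶜ := by
  have hbound : ∀ x, ‖F x‖ ≤ K.indicator (fun _ => a) x + Kᶜ.indicator (fun _ => b) x := by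
    intro x
    by_cases hx : x ∈ K
    · simpa [hx] using hFK x hx
    · simpa [hx] using hFKc x hx
  calc ‖∫ x, F x ∂μ‖
      ≤ ∫ x, (K.indicator (fun _ => a) x + Kᶜ.indicator (fun _ => b) x) ∂μ :=
        norm_integral_le_of_norm_le (((integrable_const a).indicator hK).add
          ((integrable_const b).indicator hK.compl)) (.of_forall hbound)
    _ = a * μ.real K + b * μ.real Kᶜ := by
        rw [integral_add ((integrable_const a).indicator hK)
          ((integrable_const b).indicator hK.compl), integral_indicator_const _ hK,
          integral_indicator_const _ hK.compl, smul_eq_mul, smul_eq_mul, mul_comm a, mul_comm b]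

section Reward

variable {N dU dV : ℕ} {T C : ℝ} {U : Set (EN dU)} {V : Set (EN dV)}
  {l : EN N → ℝ → EN dU → EN dV → ℝ} {u : ℝ → EN dU} {w w' : ℝ → EN dV}

theorem aestronglyMeasurable_reward {α : Type*} [MeasurableSpace α] {μ : Measure α}
    (hl : ContinuousOn (fun p : EN N × ℝ × EN dU × EN dV => l p.1 p.2.1 p.2.2.1 p.2.2.2)
      (univ ×ˢ Icc 0 T ×ˢ U ×ˢ V))
    (hU : MeasurableSet U) (hV : MeasurableSet V) (hu : Measurable u) (huU : ∀ s, u s ∈ U)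
    (hw : Measurable w) (hwV : ∀ s, w s ∈ V) {x : α → EN N} {t : α → ℝ} (hx : Measurable x)
    (ht : Measurable t) (htT : ∀ᵐ a ∂μ, t a ∈ Icc 0 T) :
    AEStronglyMeasurable (fun a => l (x a) (t a) (u (t a)) (w (t a))) μ :=
  hl.aestronglyMeasurable_comp (MeasurableSet.univ.prod (measurableSet_Icc.prod (hU.prod hV)))
    (hx.prodMk (ht.prodMk ((hu.comp ht).prodMk (hw.comp ht))))
    (htT.mono fun _ ha => ⟨trivial, ha, huU _, hwV _⟩)

theorem integrableOn_reward
    (hl : ContinuousOn (fun p : EN N × ℝ × EN dU × EN dV => l p.1 p.2.1 p.2.2.1 p.2.2.2)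
      (univ ×ˢ Icc 0 T ×ˢ U ×ˢ V))
    (hC : ∀ x, ∀ t ∈ Icc 0 T, ∀ a ∈ U, ∀ b ∈ V, |l x t a b| ≤ C)
    (hU : MeasurableSet U) (hV : MeasurableSet V) (hu : Measurable u) (huU : ∀ s, u s ∈ U)
    (hw : Measurable w) (hwV : ∀ s, w s ∈ V) (x : EN N) :
    IntegrableOn (fun s => l x s (u s) (w s)) (Icc 0 T) :=
  .of_bound measure_Icc_lt_top (aestronglyMeasurable_reward hl hU hV hu huU hw hwV
      measurable_const measurable_id (ae_restrict_mem measurableSet_Icc)) C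
    (ae_restrict_of_forall_mem measurableSet_Icc fun s hs => hC x s hs _ (huU s) _ (hwV s))

theorem abs_setIntegral_reward_le (hT : 0 ≤ T)
    (hC : ∀ x, ∀ t ∈ Icc 0 T, ∀ a ∈ U, ∀ b ∈ V, |l x t a b| ≤ C)
    (huU : ∀ s, u s ∈ U) (hwV : ∀ s, w s ∈ V) (x : EN N) :
    |∫ s in Icc 0 T, l x s (u s) (w s)| ≤ C * T := by
  simpa [Real.volume_real_Icc_of_le hT] using norm_setIntegral_le_of_norm_le_const
    (f := fun s => l x s (u s) (w s)) (measure_Icc_lt_top (μ := volume))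
    fun s hs => (Real.norm_eq_abs _).trans_le (hC x s hs _ (huU s) _ (hwV s))

theorem integrable_setIntegral_reward {m : Measure (EN N)} [IsFiniteMeasure m] (hT : 0 ≤ T)
    (hl : ContinuousOn (fun p : EN N × ℝ × EN dU × EN dV => l p.1 p.2.1 p.2.2.1 p.2.2.2)
      (univ ×ˢ Icc 0 T ×ˢ U ×ˢ V))
    (hC : ∀ x, ∀ t ∈ Icc 0 T, ∀ a ∈ U, ∀ b ∈ V, |l x t a b| ≤ C)
    (hU : MeasurableSet U) (hV : MeasurableSet V) (hu : Measurable u) (huU : ∀ s, u s ∈ U)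
    (hw : Measurable w) (hwV : ∀ s, w s ∈ V) :
    Integrable (fun x => ∫ s in Icc 0 T, l x s (u s) (w s)) m :=
  .of_bound (AEStronglyMeasurable.integral_prod_right' (aestronglyMeasurable_reward hl hU hV hu
      huU hw hwV measurable_fst measurable_snd
      (Measure.quasiMeasurePreserving_snd.ae (ae_restrict_mem measurableSet_Icc))))
    (C * T) (.of_forall (abs_setIntegral_reward_le hT hC huU hwV))

theorem exists_abs_reward_sub_le_add_mul_dist {K : Set (EN N)} (hK : IsCompact K)
    (hU : IsCompact U) (hV : IsCompact V)
    (hl : ContinuousOn (fun p : EN N × ℝ × EN dU × EN dV => l p.1 p.2.1 p.2.2.1 p.2.2.2)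
      (univ ×ˢ Icc 0 T ×ˢ U ×ˢ V)) {η : ℝ} (hη : 0 < η) :
    ∃ A, 0 ≤ A ∧ ∀ x ∈ K, ∀ t ∈ Icc 0 T, ∀ a ∈ U, ∀ b ∈ V, ∀ b' ∈ V,
      |l x t a b - l x t a b'| ≤ η + A * dist b b' := by
  obtain ⟨A, hA, hlA⟩ := (hK.prod (isCompact_Icc.prod (hU.prod hV))).exists_dist_le_add_mul_dist
    (hl.mono (prod_mono (subset_univ K) subset_rfl)) hη
  refine ⟨A, hA, fun x hx t ht a ha b hb b' hb' => ?_⟩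
  simpa [Real.dist_eq, Prod.dist_eq] using
    hlA (x, t, a, b) ⟨hx, ht, ha, hb⟩ (x, t, a, b') ⟨hx, ht, ha, hb'⟩

theorem abs_setIntegral_reward_sub_le (hT : 0 ≤ T)
    (hl : ContinuousOn (fun p : EN N × ℝ × EN dU × EN dV => l p.1 p.2.1 p.2.2.1 p.2.2.2)
      (univ ×ˢ Icc 0 T ×ˢ U ×ˢ V))
    (hC : ∀ x, ∀ t ∈ Icc 0 T, ∀ a ∈ U, ∀ b ∈ V, |l x t a b| ≤ C)
    (hU : MeasurableSet U) (hV : MeasurableSet V) (hu : Measurable u) (huU : ∀ s, u s ∈ U)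
    (hw : Measurable w) (hwV : ∀ s, w s ∈ V) (hw' : Measurable w') (hw'V : ∀ s, w' s ∈ V)
    (hwi : IntegrableOn w (Icc 0 T)) (hw'i : IntegrableOn w' (Icc 0 T)) {x : EN N} {η A : ℝ}
    (hlx : ∀ t ∈ Icc 0 T, ∀ a ∈ U, ∀ b ∈ V, ∀ b' ∈ V,
      |l x t a b - l x t a b'| ≤ η + A * dist b b') :
    |(∫ s in Icc 0 T, l x s (u s) (w s)) - ∫ s in Icc 0 T, l x s (u s) (w' s)| ≤
      η * T + A * ∫ s in Icc 0 T, ‖w s - w' s‖ := by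
  have hlw := integrableOn_reward hl hC hU hV hu huU hw hwV x
  have hlw' := integrableOn_reward hl hC hU hV hu huU hw' hw'V x
  have hconst : IntegrableOn (fun _ => η) (Icc 0 T) := integrableOn_const measure_Icc_lt_top.ne
  have hdist : IntegrableOn (fun s => A * ‖w s - w' s‖) (Icc 0 T) :=
    (hwi.sub hw'i).norm.const_mul A
  rw [← integral_sub hlw hlw']
  calc |∫ s in Icc 0 T, (l x s (u s) (w s) - l x s (u s) (w' s))|
      ≤ ∫ s in Icc 0 T, |l x s (u s) (w s) - l x s (u s) (w' s)| :=
        abs_integral_le_integral_abs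
    _ ≤ ∫ s in Icc 0 T, (η + A * ‖w s - w' s‖) :=
        setIntegral_mono_on (hlw.sub hlw').abs (hconst.add hdist) measurableSet_Icc fun s hs => by
            simpa [dist_eq_norm] using hlx s hs _ (huU s) _ (hwV s) _ (hw'V s)
    _ = η * T + A * ∫ s in Icc 0 T, ‖w s - w' s‖ := by
        rw [integral_add hconst hdist, setIntegral_const,
          integral_const_mul, Real.volume_real_Icc_of_le hT, smul_eq_mul, sub_zero, mul_comm]

theorem abs_integral_setIntegral_reward_sub_le {m : Measure (EN N)} [IsProbabilityMeasure m]
    (hT : 0 ≤ T)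
    (hl : ContinuousOn (fun p : EN N × ℝ × EN dU × EN dV => l p.1 p.2.1 p.2.2.1 p.2.2.2)
      (univ ×ˢ Icc 0 T ×ˢ U ×ˢ V))
    (hC : ∀ x, ∀ t ∈ Icc 0 T, ∀ a ∈ U, ∀ b ∈ V, |l x t a b| ≤ C)
    (hU : MeasurableSet U) (hV : MeasurableSet V) (hu : Measurable u) (huU : ∀ s, u s ∈ U)
    (hw : Measurable w) (hwV : ∀ s, w s ∈ V) (hw' : Measurable w') (hw'V : ∀ s, w' s ∈ V)
    (hwi : IntegrableOn w (Icc 0 T)) (hw'i : IntegrableOn w' (Icc 0 T))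
    {K : Set (EN N)} (hK : MeasurableSet K) {η A : ℝ} (hη : 0 ≤ η) (hA : 0 ≤ A)
    (hlK : ∀ x ∈ K, ∀ t ∈ Icc 0 T, ∀ a ∈ U, ∀ b ∈ V, ∀ b' ∈ V,
      |l x t a b - l x t a b'| ≤ η + A * dist b b') :
    |(∫ x, (∫ s in Icc 0 T, l x s (u s) (w s)) ∂m) - ∫ x, (∫ s in Icc 0 T, l x s (u s) (w' s)) ∂m| ≤
      η * T + A * (∫ s in Icc 0 T, ‖w s - w' s‖) + 2 * C * T * m.real Kᶜ := by
  have ha : 0 ≤ η * T + A * ∫ s in Icc 0 T, ‖w s - w' s‖ := by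
    have : 0 ≤ ∫ s in Icc 0 T, ‖w s - w' s‖ :=
      setIntegral_nonneg measurableSet_Icc fun _ _ => norm_nonneg _
    positivity
  have hfar : ∀ x, |(∫ s in Icc 0 T, l x s (u s) (w s)) - ∫ s in Icc 0 T, l x s (u s) (w' s)| ≤
      2 * C * T := fun x => (abs_sub _ _).trans (by
        linarith [abs_setIntegral_reward_le hT hC huU hwV x,
          abs_setIntegral_reward_le hT hC huU hw'V x])
  rw [← integral_sub (integrable_setIntegral_reward hT hl hC hU hV hu huU hw hwV)
    (integrable_setIntegral_reward hT hl hC hU hV hu huU hw' hw'V), ← Real.norm_eq_abs]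
  calc _ ≤ (η * T + A * ∫ s in Icc 0 T, ‖w s - w' s‖) * m.real K + 2 * C * T * m.real Kᶜ :=
        norm_integral_le_add_of_norm_le_on hK (fun x hx => abs_setIntegral_reward_sub_le hT hl hC
          hU hV hu huU hw hwV hw' hw'V hwi hw'i (hlK x hx)) fun x _ => hfar x
    _ ≤ η * T + A * (∫ s in Icc 0 T, ‖w s - w' s‖) + 2 * C * T * m.real Kᶜ :=
        add_le_add_left (mul_le_of_le_one_right ha measureReal_le_one) _

end Reward

/-- **Lemma 2.6.** The payoff associated to a control `v` can be approximated by the payoff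
of the delayed control `s ↦ v((s-δ)₊)`, uniformly in `u`. -/
theorem delay_approximation
    {N dU dV : ℕ} (T : ℝ) (hT : 0 < T)
    (U : Set (EN dU)) (V : Set (EN dV)) (hUc : IsCompact U) (hVc : IsCompact V)
    (l : EN N → ℝ → EN dU → EN dV → ℝ) (hl : RegReward T U V l)
    (m : Measure (EN N)) (hm : m ∈ Pi2 N) (ε : ℝ) (hε : 0 < ε)
    (v : ℝ → EN dV) (hv : Measurable v) (hvV : ∀ s, v s ∈ V) :
    ∃ δ > (0:ℝ), ∀ u : ℝ → EN dU, Measurable u → (∀ s, u s ∈ U) →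
      |(∫ x, (∫ s in Icc 0 T, l x s (u s) (v s)) ∂m) -
          ∫ x, (∫ s in Icc 0 T, l x s (u s) (v (max (s - δ) 0))) ∂m| ≤ ε := by
  obtain ⟨hl, ⟨C₀, hC₀⟩, -⟩ := hl
  obtain ⟨C, hC1, hC⟩ : ∃ C : ℝ, 0 < C ∧ ∀ x, ∀ t ∈ Icc 0 T, ∀ a ∈ U, ∀ b ∈ V, |l x t a b| ≤ C :=
    ⟨max C₀ 1, by positivity, fun x t ht a ha b hb => (hC₀ x t ht a ha b hb).trans (le_max_left ..)⟩
  have := hm.1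
  obtain ⟨K, hK, hmK⟩ := isTightMeasureSet_iff_exists_isCompact_measure_compl_le.1
    (isTightMeasureSet_singleton (μ := m)) (ENNReal.ofReal (ε / (6 * C * T))) (by positivity)
  obtain ⟨A, hA, hlK⟩ := exists_abs_reward_sub_le_add_mul_dist hK hUc hVc hl
    (show 0 < ε / (3 * T) by positivity)
  obtain ⟨B, hB⟩ := hVc.isBounded.exists_norm_le
  have hvi : IntegrableOn v (Icc 0 T) :=
    .of_bound measure_Icc_lt_top hv.aestronglyMeasurable B (.of_forall fun s => hB _ (hvV s))
  obtain ⟨δ, hδv, hδ⟩ := ((((tendsto_setIntegral_norm_sub_comp_delay hvi).const_mul A).mono_left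
    (nhdsWithin_mono _ Ioi_subset_Ici_self)).eventually
    (gt_mem_nhds (show A * 0 < ε / 3 by linarith))).and self_mem_nhdsWithin |>.exists
  refine ⟨δ, hδ, fun u hu huU => ?_⟩
  have hvδ : Measurable fun s => v (max (s - δ) 0) :=
    hv.comp ((measurable_id.sub_const δ).max measurable_const)
  calc _ ≤ ε / (3 * T) * T + A * (∫ s in Icc 0 T, ‖v s - v (max (s - δ) 0)‖)
        + 2 * C * T * m.real Kᶜ :=
        abs_integral_setIntegral_reward_sub_le hT.le hl hC hUc.isClosed.measurableSet
          hVc.isClosed.measurableSet hu huU hv hvV hvδ (fun s => hvV _) hvi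
          (.of_bound measure_Icc_lt_top hvδ.aestronglyMeasurable B
            (.of_forall fun s => hB _ (hvV _)))
          hK.isClosed.measurableSet (by positivity) hA hlK
    _ ≤ ε := by
        have hη : ε / (3 * T) * T = ε / 3 := by field_simp
        have htail : 2 * C * T * m.real Kᶜ ≤ 2 * C * T * (ε / (6 * C * T)) := by
          gcongr
          exact ENNReal.toReal_le_of_le_ofReal (by positivity) (hmK m rfl)
        have htail' : 2 * C * T * (ε / (6 * C * T)) = ε / 3 := by field_simp; ring
        linarith

end
end

section
/- Let f : [0,T] → ℝ be continuous and let w : [0,T] → ℝ be continuous and a viscosity subsolution of w'(t) + f(t) = 0 on (0,T), in the sense that for every C¹ function φ : [0,T] → ℝ such that w − φ has a local maximum at t̄ ∈ (0,T), one has φ'(t̄) + f(t̄) ≥ 0. Then for all 0 ≤ t ≤ s ≤ T, w(s) − w(t) + ∫_t^s f(r) dr ≥ 0. -/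
open MeasureTheory Set Filter Topology
open scoped ENNReal NNReal

noncomputable section

/-!
Adding a C¹ antiderivative `F` of `f` to `w` turns a viscosity subsolution of `w' + f = 0` into
a viscosity subsolution `g = w + F` of `g' = 0`, and the claim becomes `g t ≤ g s`. If `g` went
down somewhere, say `g b < g x` with `a < x < b`, then subtracting the test function
`ψ y = -ε (y - x) + K e(x - y)`, with `e` the smooth function vanishing on `(-∞, 0]` and
`ε`, `K` suitably chosen, makes `g - ψ` larger at `x` than at both ends of `[a, b]`. So `g - ψ`
has an interior maximum, where the subsolution property demands `ψ' ≥ 0`, whereas `ψ' ≤ -ε`.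
-/

def ViscositySubsolution (f w : ℝ → ℝ) (s : Set ℝ) : Prop :=
  ∀ φ : ℝ → ℝ, ContDiff ℝ 1 φ → ∀ t ∈ s,
    IsLocalMax (fun x => w x - φ x) t → 0 ≤ deriv φ t + f t

theorem ContinuousOn.exists_isLocalMax_mem_Ioo {α β : Type*}
    [ConditionallyCompleteLinearOrder α] [TopologicalSpace α] [OrderTopology α]
    [LinearOrder β] [TopologicalSpace β] [OrderClosedTopology β]
    {h : α → β} {a b x : α} (hh : ContinuousOn h (Icc a b)) (hx : x ∈ Icc a b)
    (ha : h a < h x) (hb : h b < h x) : ∃ r ∈ Ioo a b, IsLocalMax h r := by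
  obtain ⟨r, hr, hmax⟩ := isCompact_Icc.exists_isMaxOn ⟨x, hx⟩ hh
  have hra : r ≠ a := by rintro rfl; exact (hmax hx).not_gt ha
  have hrb : r ≠ b := by rintro rfl; exact (hmax hx).not_gt hb
  have hr' : r ∈ Ioo a b := ⟨hr.1.lt_of_ne' hra, hr.2.lt_of_ne hrb⟩
  exact ⟨r, hr', hmax.isLocalMax (Icc_mem_nhds hr'.1 hr'.2)⟩

theorem ContinuousOn.exists_contDiff_hasDerivAt {f : ℝ → ℝ} {a b : ℝ} (hab : a ≤ b)
    (hf : ContinuousOn f (Icc a b)) :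
    ∃ F : ℝ → ℝ, ContDiff ℝ 1 F ∧ ∀ t ∈ Icc a b, HasDerivAt F (f t) t := by
  set fc : ℝ → ℝ := fun r => f (projIcc a b hab r)
  have hfc : Continuous fc :=
    hf.comp_continuous (continuous_subtype_val.comp continuous_projIcc) fun r =>
      (projIcc a b hab r).2
  have hF : ∀ t, HasDerivAt (fun u => ∫ r in a..u, fc r) (fc t) t := fun t =>
    (hfc.integral_hasStrictDerivAt a t).hasDerivAt
  refine ⟨fun u => ∫ r in a..u, fc r, ?_, fun t ht => ?_⟩
  · rw [contDiff_one_iff_deriv]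
    refine ⟨fun t => (hF t).differentiableAt, ?_⟩
    rwa [show deriv _ = fc from funext fun t => (hF t).deriv]
  · simpa only [fc, projIcc_of_mem hab ht] using hF t

theorem exists_contDiff_penalty {a x ε : ℝ} (hax : a < x) (hε : 0 ≤ ε) (C : ℝ) :
    ∃ ψ : ℝ → ℝ, ContDiff ℝ 1 ψ ∧ (∀ y, deriv ψ y ≤ -ε) ∧
      (∀ y, x ≤ y → ψ y = -ε * (y - x)) ∧ C ≤ ψ a := by
  have he : 0 < expNegInvGlue (x - a) := expNegInvGlue.pos_of_pos (sub_pos.2 hax)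
  set K := |C| / expNegInvGlue (x - a)
  have hglue : Differentiable ℝ expNegInvGlue :=
    (expNegInvGlue.contDiff (n := 1)).differentiable one_ne_zero
  refine ⟨fun y => -ε * (y - x) + K * expNegInvGlue (x - y), by fun_prop, fun y => ?_,
    fun y hy => ?_, ?_⟩
  · have hanti : Antitone fun y => expNegInvGlue (x - y) :=
      expNegInvGlue.monotone.comp_antitone fun _ _ hyz => sub_le_sub_left hyz x
    have hd : DifferentiableAt ℝ (fun y => expNegInvGlue (x - y)) y := by fun_prop
    have hlin : deriv (fun y => -ε * (y - x)) y = -ε := by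
      rw [(((hasDerivAt_id' y).sub_const x).const_mul (-ε)).deriv, mul_one]
    rw [deriv_fun_add (by fun_prop) (hd.const_mul K), deriv_const_mul K hd, hlin]
    nlinarith [hanti.deriv_nonpos (x := y), div_nonneg (abs_nonneg C) he.le]
  · simp only [expNegInvGlue.zero_of_nonpos (sub_nonpos.2 hy), mul_zero, add_zero]
  · have hKe : K * expNegInvGlue (x - a) = |C| := div_mul_cancel₀ _ he.ne'
    nlinarith [le_abs_self C, mul_nonneg hε (sub_pos.2 hax).le]

namespace ViscositySubsolution

variable {f w g : ℝ → ℝ} {s : Set ℝ}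

theorem mono {s' : Set ℝ} (h : ViscositySubsolution f w s) (hs : s' ⊆ s) :
    ViscositySubsolution f w s' :=
  fun φ hφ t ht hmax => h φ hφ t (hs ht) hmax

theorem add_antideriv {F : ℝ → ℝ} (h : ViscositySubsolution f w s) (hF : ContDiff ℝ 1 F)
    (hFf : ∀ t ∈ s, deriv F t = f t) : ViscositySubsolution 0 (fun t => w t + F t) s := by
  intro ψ hψ t ht hmax
  have hmax' : IsLocalMax (fun x => w x - (ψ x - F x)) t := by
    convert hmax using 2 with x
    ring
  have key := h _ (hψ.sub hF) t ht hmax'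
  rw [deriv_fun_sub (hψ.differentiable one_ne_zero t) (hF.differentiable one_ne_zero t),
    hFf t ht] at key
  simpa using key

theorem le_right_of_mem_Ioo {a b x : ℝ} (hg : ContinuousOn g (Icc a b))
    (h : ViscositySubsolution 0 g (Ioo a b)) (hx : x ∈ Ioo a b) : g x ≤ g b := by
  by_contra! hlt
  obtain ⟨ε, hε, hεb⟩ := exists_pos_mul_lt (sub_pos.2 hlt) (b - x)
  obtain ⟨ψ, hψ, hψ', hψ_right, hψa⟩ :=
    exists_contDiff_penalty hx.1 hε.le (g a - g x + 1)
  obtain ⟨r, hr, hmax⟩ := ContinuousOn.exists_isLocalMax_mem_Ioo (h := fun y => g y - ψ y)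
    (hg.sub hψ.continuous.continuousOn) (Ioo_subset_Icc_self hx)
    (by rw [hψ_right x le_rfl]; linarith)
    (by rw [hψ_right x le_rfl, hψ_right b hx.2.le]; linarith)
  have hder := h ψ hψ r hr hmax
  rw [Pi.zero_apply, add_zero] at hder
  linarith [hψ' r]

theorem monotoneOn {a b : ℝ} (hg : ContinuousOn g (Icc a b))
    (h : ViscositySubsolution 0 g (Ioo a b)) : MonotoneOn g (Icc a b) := by
  intro t ht s hs hts
  rcases hts.eq_or_lt with rfl | hts
  · rfl
  have hsub : Icc t s ⊆ Icc a b := Icc_subset_Icc ht.1 hs.2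
  refine ContinuousWithinAt.closure_le (s := Ioo t s) ?_
    ((hg t ht).mono (Ioo_subset_Icc_self.trans hsub)) continuousWithinAt_const
    fun x hx => (h.mono (Ioo_subset_Ioo ht.1 hs.2)).le_right_of_mem_Ioo (hg.mono hsub) hx
  rw [closure_Ioo hts.ne]
  exact left_mem_Icc.2 hts.le

end ViscositySubsolution

/-- A continuous viscosity subsolution of the ODE `w' + f = 0` on `(0,T)` satisfies the
integral inequality `w(s) - w(t) + ∫_t^s f(r) dr ≥ 0` for all `0 ≤ t ≤ s ≤ T`. -/
theorem subsolution_integral_inequality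
    (T : ℝ) (hT : 0 < T) (f w : ℝ → ℝ)
    (hf : ContinuousOn f (Icc 0 T)) (hw : ContinuousOn w (Icc 0 T))
    (hsub : ∀ φ : ℝ → ℝ, ContDiff ℝ 1 φ → ∀ tb ∈ Ioo 0 T,
      IsLocalMax (fun t => w t - φ t) tb → deriv φ tb + f tb ≥ 0) :
    ∀ t ∈ Icc 0 T, ∀ s ∈ Icc 0 T, t ≤ s →
      0 ≤ w s - w t + ∫ r in t..s, f r := by
  intro t ht s hs hts
  obtain ⟨F, hF, hFf⟩ := hf.exists_contDiff_hasDerivAt hT.le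
  have hvisc : ViscositySubsolution 0 (fun r => w r + F r) (Ioo 0 T) :=
    ViscositySubsolution.add_antideriv hsub hF fun r hr => (hFf r (Ioo_subset_Icc_self hr)).deriv
  have hmono : w t + F t ≤ w s + F s :=
    hvisc.monotoneOn (hw.add hF.continuous.continuousOn) ht hs hts
  have hts' : uIcc t s ⊆ Icc 0 T := uIcc_subset_Icc ht hs
  have hint : ∫ r in t..s, f r = F s - F t :=
    intervalIntegral.integral_eq_sub_of_hasDerivAt (fun r hr => hFf r (hts' hr))
      ((hf.mono hts').intervalIntegrable)
  rw [hint]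
  linarith

end
end
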